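/- arXiv:1410.0428 — 7 statements merged into one kernel-verified Lean document; each statement's English description precedes it below -/
import Mathlib

section
/- Let X be a topological space with a Borel probability measure μ, Y a metric space, f : X → Y a Borel measurable map, and c ∈ Y a point. Then d_P(f_*μ, δ_c) = d_KF(f, c), where δ_c is the Dirac measure at c and the right-hand side is the Ky Fan distance between f and the constant map c. -/
open MeasureTheory

/-- The Ky Fan distance between two measurable maps `f g : X → Y`. -/
noncomputable def kyFanDist {X Y : Type*} [MeasurableSpace X] [PseudoMetricSpace Y]
    (μ : Measure X) (f g : X → Y) : ℝ :=
  sInf {ε : ℝ | 0 ≤ ε ∧ μ {x | ε < dist (f x) (g x)} ≤ ENNReal.ofReal ε}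

/-- The Prohorov distance between Borel probability measures on a metric space `Y`. -/
noncomputable def prohorovDist {Y : Type*} [PseudoMetricSpace Y] [MeasurableSpace Y]
    (μ ν : Measure Y) : ℝ :=
  sInf {ε : ℝ | 0 < ε ∧ ∀ A : Set Y, MeasurableSet A →
    ν A ≤ μ (Metric.thickening ε A) + ENNReal.ofReal ε}

/-!
Both distances are infima of thresholds `ε` at which the mass of `f_*μ` lying at distance about `ε`
or more from `c` is at most `ε`. Testing the Dirac mass against all measurable sets reduces to
testing it against `{c}`, whose `ε`-thickening is the open ball `B(c, ε)`; the Ky Fan distance uses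
the complement of the closed ball instead. Since `B(c, ε + δ)ᶜ ⊆ B̄(c, ε)ᶜ ⊆ B(c, ε)ᶜ`, the two sets
of thresholds are squeezed between each other up to an arbitrarily small `δ`, so their infima agree.
-/

theorem csInf_eq_csInf_of_subset_of_forall_add_mem {P K : Set ℝ} (hK : BddBelow K)
    (hK_ne : K.Nonempty) (hPK : P ⊆ K) (hKP : ∀ ε ∈ K, ∀ δ > 0, ε + δ ∈ P) :
    sInf P = sInf K := by
  obtain ⟨ε₀, hε₀⟩ := hK_ne
  have hP_ne : P.Nonempty := ⟨ε₀ + 1, hKP ε₀ hε₀ 1 one_pos⟩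
  refine le_antisymm (le_csInf ⟨ε₀, hε₀⟩ fun ε hε => ?_) (csInf_le_csInf hK hP_ne hPK)
  exact le_of_forall_pos_le_add fun δ hδ => csInf_le (hK.mono hPK) (hKP ε hε δ hδ)

section

variable {Y : Type*} [PseudoMetricSpace Y] [MeasurableSpace Y]

theorem dirac_le_thickening_add_iff [MeasurableSingletonClass Y] (ν : Measure Y) (c : Y)
    (ε : ℝ) (r : ENNReal) :
    (∀ A : Set Y, MeasurableSet A → Measure.dirac c A ≤ ν (Metric.thickening ε A) + r) ↔
      1 ≤ ν (Metric.ball c ε) + r := by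
  refine ⟨fun h => ?_, fun h A hA => ?_⟩
  · simpa [Metric.thickening_singleton] using h {c} (measurableSet_singleton c)
  · by_cases hc : c ∈ A
    · rw [Measure.dirac_apply_of_mem hc]
      exact h.trans (add_le_add_left (measure_mono (Metric.ball_subset_thickening hc ε)) r)
    · simp [Measure.dirac_apply' c hA, hc]

theorem one_le_measure_add_iff_measure_compl_le {α : Type*} [MeasurableSpace α] (ν : Measure α)
    [IsProbabilityMeasure ν] {s : Set α} (hs : MeasurableSet s) (r : ENNReal) :
    1 ≤ ν s + r ↔ ν sᶜ ≤ r := by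
  rw [prob_compl_eq_one_sub hs, tsub_le_iff_right, add_comm]

theorem prohorovDist_dirac_eq [OpensMeasurableSpace Y] [MeasurableSingletonClass Y]
    (ν : Measure Y) [IsProbabilityMeasure ν] (c : Y) :
    prohorovDist ν (Measure.dirac c) =
      sInf {ε : ℝ | 0 < ε ∧ ν (Metric.ball c ε)ᶜ ≤ ENNReal.ofReal ε} := by
  simp only [prohorovDist, dirac_le_thickening_add_iff,
    one_le_measure_add_iff_measure_compl_le ν measurableSet_ball]

theorem kyFanDist_const_eq {X : Type*} [MeasurableSpace X] [OpensMeasurableSpace Y]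
    (μ : Measure X) {f : X → Y} (hf : Measurable f) (c : Y) :
    kyFanDist μ f (fun _ => c) =
      sInf {ε : ℝ | 0 ≤ ε ∧ μ.map f (Metric.closedBall c ε)ᶜ ≤ ENNReal.ofReal ε} := by
  have h_map (ε : ℝ) : μ.map f (Metric.closedBall c ε)ᶜ = μ {x | ε < dist (f x) c} := by
    rw [Measure.map_apply hf measurableSet_closedBall.compl]
    congr 1
    ext x
    simp
  simp only [kyFanDist, h_map]

theorem sInf_measure_ball_compl_le_eq_sInf_measure_closedBall_compl_le (ν : Measure Y)
    [IsFiniteMeasure ν] (c : Y) :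
    sInf {ε : ℝ | 0 < ε ∧ ν (Metric.ball c ε)ᶜ ≤ ENNReal.ofReal ε} =
      sInf {ε : ℝ | 0 ≤ ε ∧ ν (Metric.closedBall c ε)ᶜ ≤ ENNReal.ofReal ε} := by
  refine csInf_eq_csInf_of_subset_of_forall_add_mem ⟨0, fun ε hε => hε.1⟩
    ⟨(ν Set.univ).toReal, ENNReal.toReal_nonneg, ?_⟩ ?_ ?_
  · rw [ENNReal.ofReal_toReal (measure_ne_top ν _)]
    exact measure_mono (Set.subset_univ _)
  · rintro ε ⟨hε, hν⟩
    refine ⟨hε.le, (measure_mono ?_).trans hν⟩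
    exact Set.compl_subset_compl.mpr Metric.ball_subset_closedBall
  · rintro ε ⟨hε, hν⟩ δ hδ
    refine ⟨by positivity, (measure_mono ?_).trans (hν.trans (ENNReal.ofReal_le_ofReal ?_))⟩
    · exact Set.compl_subset_compl.mpr (Metric.closedBall_subset_ball (by linarith))
    · linarith

end

theorem prohorovDist_map_dirac_eq_kyFanDist_general {X Y : Type*}
    [MeasurableSpace X]
    [MetricSpace Y] [MeasurableSpace Y] [BorelSpace Y]
    (μ : Measure X) [IsProbabilityMeasure μ]
    (f : X → Y) (hf : Measurable f) (c : Y) :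
    prohorovDist (Measure.map f μ) (Measure.dirac c) = kyFanDist μ f (fun _ => c) := by
  have : IsProbabilityMeasure (μ.map f) := Measure.isProbabilityMeasure_map hf.aemeasurable
  rw [prohorovDist_dirac_eq, kyFanDist_const_eq μ hf c,
    sInf_measure_ball_compl_le_eq_sInf_measure_closedBall_compl_le]

/-- for a Borel measurable map `f : X → Y` and a point `c ∈ Y`,
`d_P (f_*μ, δ_c) = d_KF (f, const c)`. -/
theorem prohorovDist_map_dirac_eq_kyFanDist {X Y : Type*}
    [TopologicalSpace X] [MeasurableSpace X] [BorelSpace X]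
    [MetricSpace Y] [MeasurableSpace Y] [BorelSpace Y]
    (μ : Measure X) [IsProbabilityMeasure μ]
    (f : X → Y) (hf : Measurable f) (c : Y) :
    prohorovDist (Measure.map f μ) (Measure.dirac c) = kyFanDist μ f (fun _ => c) :=
  prohorovDist_map_dirac_eq_kyFanDist_general μ f hf c
end

section
/- The Lipschitz order ≺ is a partial order on the set of mm-isomorphism classes of mm-spaces: it is reflexive, transitive, and if X ≺ Y and Y ≺ X then X and Y are mm-isomorphic. -/
/-!
A 1-Lipschitz self-map `h` of a finite, fully supported mm-space that preserves the measure is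
an isometry: `h × h` preserves the product measure and maps no pair at distance `< r` to one at
distance `≥ r`, so for every `r` the pairs it moves from distance `≥ r` to `< r` form a null
set. The pairs whose distance `h` strictly shrinks form an open set covered by countably many of
these null sets, hence are absent. If `g : X → Y` and `f : Y → X` witness `Y ≺ X ≺ Y`, this
makes `f ∘ g` an isometry, hence `g` one as well; `g` pushes `μX` forward to the fully supported
`μY`, so its range is dense, and closed because `X` is complete.
-/

open MeasureTheory

/-- `LipDom μX μY` means the mm-space `(X, μX)` Lipschitz dominates `(Y, μY)`,
i.e. `Y ≺ X`: there is a 1-Lipschitz map `f : X → Y` with `f_* μX = μY`. -/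
def LipDom {X Y : Type*} [PseudoMetricSpace X] [PseudoMetricSpace Y]
    [MeasurableSpace X] [MeasurableSpace Y] (μX : Measure X) (μY : Measure Y) : Prop :=
  ∃ f : X → Y, LipschitzWith 1 f ∧ Measure.map f μX = μY

/-- Two mm-spaces (with fully supported measures) are mm-isomorphic if there is a
measure-preserving surjective isometry between them. -/
def MMIsomorphic {X Y : Type*} [PseudoMetricSpace X] [PseudoMetricSpace Y]
    [MeasurableSpace X] [MeasurableSpace Y] (μX : Measure X) (μY : Measure Y) : Prop :=
  ∃ f : X → Y, Isometry f ∧ Function.Surjective f ∧ Measure.map f μX = μY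

theorem MeasureTheory.MeasurePreserving.measure_diff_preimage_eq_zero {α : Type*}
    [MeasurableSpace α] {μ : Measure α} [IsFiniteMeasure μ] {T : α → α} {s : Set α}
    (hT : MeasurePreserving T μ μ) (hs : MeasurableSet s) (hsub : T ⁻¹' s ⊆ s) :
    μ (s \ T ⁻¹' s) = 0 := by
  rw [measure_sdiff hsub (hT.measurable hs).nullMeasurableSet (measure_ne_top _ _),
    hT.measure_preimage hs.nullMeasurableSet, tsub_self]

theorem LipschitzWith.isometry_of_measurePreserving {X : Type*} [PseudoMetricSpace X]
    [SecondCountableTopology X] [MeasurableSpace X] [BorelSpace X] {μ : Measure X}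
    [IsFiniteMeasure μ] [μ.IsOpenPosMeasure] {h : X → X} (hl : LipschitzWith 1 h)
    (hm : MeasurePreserving h μ μ) : Isometry h := by
  have hdist_le (x y : X) : dist (h x) (h y) ≤ dist x y := by simpa using hl.dist_le_mul x y
  let D (r : ℝ) : Set (X × X) := {p | r ≤ dist p.1 p.2}
  have hD_null (r : ℝ) : (μ.prod μ) (D r \ Prod.map h h ⁻¹' D r) = 0 :=
    (hm.prod hm).measure_diff_preimage_eq_zero
      (isClosed_le continuous_const continuous_dist).measurableSet
      fun p hp => hp.trans (hdist_le p.1 p.2)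
  have hcont : Continuous h := hl.continuous
  have hshrink_empty : {p : X × X | dist (h p.1) (h p.2) < dist p.1 p.2} = ∅ := by
    refine (isOpen_lt (by fun_prop) continuous_dist).eq_empty_of_measure_zero
      (measure_mono_null ?_ (measure_iUnion_null fun q : ℚ => hD_null q))
    intro p (hp : dist (h p.1) (h p.2) < dist p.1 p.2)
    obtain ⟨q, hq_lt, hq_le⟩ := exists_rat_btwn hp
    exact Set.mem_iUnion.2 ⟨q, hq_le.le, not_le.2 hq_lt⟩
  exact Isometry.of_dist_eq fun x y =>
    (hdist_le x y).antisymm <| not_lt.1 fun hlt =>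
      Set.eq_empty_iff_forall_notMem.1 hshrink_empty (x, y) hlt

theorem Isometry.of_comp_of_lipschitzWith_one {α β : Type*} [PseudoEMetricSpace α]
    [PseudoEMetricSpace β] {f : β → α} {g : α → β} (hf : LipschitzWith 1 f)
    (hg : LipschitzWith 1 g) (hfg : Isometry (f ∘ g)) : Isometry g := fun x y =>
  le_antisymm (by simpa using hg.edist_le_mul x y)
    (calc edist x y = edist (f (g x)) (f (g y)) := (hfg x y).symm
      _ ≤ edist (g x) (g y) := by simpa using hf.edist_le_mul (g x) (g y))

theorem Continuous.denseRange_of_map_eq {X Y : Type*} [TopologicalSpace X] [MeasurableSpace X]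
    [OpensMeasurableSpace X] [TopologicalSpace Y] [MeasurableSpace Y] [BorelSpace Y]
    {μ : Measure X} {ν : Measure Y} [ν.IsOpenPosMeasure] {f : X → Y} (hf : Continuous f)
    (hfν : μ.map f = ν) : DenseRange f := by
  have hopen : IsOpen (closure (Set.range f))ᶜ := isClosed_closure.isOpen_compl
  have hnull : ν (closure (Set.range f))ᶜ = 0 := by
    rw [← hfν, Measure.map_apply hf.measurable hopen.measurableSet]
    exact measure_mono_null (fun x hx => hx (subset_closure ⟨x, rfl⟩)) measure_empty
  exact dense_iff_closure_eq.2 (Set.compl_empty_iff.1 (hopen.eq_empty_of_measure_zero hnull))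

theorem Isometry.surjective_of_denseRange {α β : Type*} [EMetricSpace α] [CompleteSpace α]
    [EMetricSpace β] {f : α → β} (hf : Isometry f) (hd : DenseRange f) :
    Function.Surjective f :=
  Set.range_eq_univ.1 (hf.isClosedEmbedding.isClosed_range.closure_eq ▸ hd.closure_range)

namespace LipDom

variable {X Y Z : Type*} [PseudoMetricSpace X] [MeasurableSpace X] [PseudoMetricSpace Y]
  [MeasurableSpace Y] [PseudoMetricSpace Z] [MeasurableSpace Z]
  {μX : Measure X} {μY : Measure Y} {μZ : Measure Z}

theorem refl (μX : Measure X) : LipDom μX μX := ⟨id, LipschitzWith.id, Measure.map_id⟩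

theorem trans [BorelSpace X] [BorelSpace Y] [BorelSpace Z] (hZY : LipDom μZ μY)
    (hYX : LipDom μY μX) : LipDom μZ μX := by
  obtain ⟨g, hg, hgμ⟩ := hZY
  obtain ⟨f, hf, hfμ⟩ := hYX
  refine ⟨f ∘ g, by simpa using hf.comp hg, ?_⟩
  rw [← Measure.map_map hf.continuous.measurable hg.continuous.measurable, hgμ, hfμ]

end LipDom

theorem LipDom.mmIsomorphic {X Y : Type*} [MetricSpace X] [CompleteSpace X]
    [SecondCountableTopology X] [MeasurableSpace X] [BorelSpace X] [MetricSpace Y]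
    [MeasurableSpace Y] [BorelSpace Y] {μX : Measure X} {μY : Measure Y} [IsFiniteMeasure μX]
    [μX.IsOpenPosMeasure] [μY.IsOpenPosMeasure] (hXY : LipDom μX μY) (hYX : LipDom μY μX) :
    MMIsomorphic μX μY := by
  obtain ⟨g, hg, hgμ⟩ := hXY
  obtain ⟨f, hf, hfμ⟩ := hYX
  have hfg : MeasurePreserving (f ∘ g) μX μX :=
    (⟨hf.continuous.measurable, hfμ⟩ : MeasurePreserving f μY μX).comp
      ⟨hg.continuous.measurable, hgμ⟩
  have hg_iso : Isometry g := .of_comp_of_lipschitzWith_one hf hg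
    ((by simpa using hf.comp hg : LipschitzWith 1 (f ∘ g)).isometry_of_measurePreserving hfg)
  exact ⟨g, hg_iso,
    hg_iso.surjective_of_denseRange (hg.continuous.denseRange_of_map_eq hgμ), hgμ⟩

theorem lipschitzOrder_partialOrder_general {X Y Z : Type*}
    [MetricSpace X] [CompleteSpace X] [TopologicalSpace.SeparableSpace X]
    [MeasurableSpace X] [BorelSpace X]
    [MetricSpace Y]
    [MeasurableSpace Y] [BorelSpace Y]
    [MetricSpace Z]
    [MeasurableSpace Z] [BorelSpace Z]
    (μX : Measure X) (μY : Measure Y) (μZ : Measure Z)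
    [IsProbabilityMeasure μX]
    [μX.IsOpenPosMeasure] [μY.IsOpenPosMeasure] :
    -- reflexivity: X ≺ X
    LipDom μX μX ∧
    -- transitivity: if X ≺ Y and Y ≺ Z then X ≺ Z
    (LipDom μY μX → LipDom μZ μY → LipDom μZ μX) ∧
    -- antisymmetry: if X ≺ Y and Y ≺ X then X and Y are mm-isomorphic
    (LipDom μY μX → LipDom μX μY → MMIsomorphic μX μY) :=
  ⟨LipDom.refl μX, fun hYX hZY => hZY.trans hYX, fun hYX hXY => hXY.mmIsomorphic hYX⟩

/-- the Lipschitz order `≺` is a partial order on mm-isomorphism classes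
of mm-spaces: reflexive, transitive, and antisymmetric up to mm-isomorphism.
(Here `Y ≺ X` is `LipDom μX μY`.) -/
theorem lipschitzOrder_partialOrder {X Y Z : Type*}
    [MetricSpace X] [CompleteSpace X] [TopologicalSpace.SeparableSpace X]
    [MeasurableSpace X] [BorelSpace X]
    [MetricSpace Y] [CompleteSpace Y] [TopologicalSpace.SeparableSpace Y]
    [MeasurableSpace Y] [BorelSpace Y]
    [MetricSpace Z] [CompleteSpace Z] [TopologicalSpace.SeparableSpace Z]
    [MeasurableSpace Z] [BorelSpace Z]
    (μX : Measure X) (μY : Measure Y) (μZ : Measure Z)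
    [IsProbabilityMeasure μX] [IsProbabilityMeasure μY] [IsProbabilityMeasure μZ]
    [μX.IsOpenPosMeasure] [μY.IsOpenPosMeasure] [μZ.IsOpenPosMeasure] :
    -- reflexivity: X ≺ X
    LipDom μX μX ∧
    -- transitivity: if X ≺ Y and Y ≺ Z then X ≺ Z
    (LipDom μY μX → LipDom μZ μY → LipDom μZ μX) ∧
    -- antisymmetry: if X ≺ Y and Y ≺ X then X and Y are mm-isomorphic
    (LipDom μY μX → LipDom μX μY → MMIsomorphic μX μY) :=
  lipschitzOrder_partialOrder_general μX μY μZ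
end

section
/- Let X be an mm-space, κ > 0, and N a natural number. Then the κN-observable diameter of X with screen (ℝ^N, ℓ∞) satisfies ObsDiam_{(ℝ^N,‖·‖_∞)}(X; −Nκ) ≤ ObsDiam(X; −κ). -/
open MeasureTheory
open scoped ENNReal

/-- The partial diameter `diam(ν; a)` of a Borel measure on a metric space. -/
noncomputable def partialDiam {α : Type*} [PseudoEMetricSpace α] [MeasurableSpace α]
    (ν : Measure α) (a : ℝ) : ℝ≥0∞ :=
  ⨅ (A : Set α) (_ : MeasurableSet A) (_ : ENNReal.ofReal a ≤ ν A), EMetric.diam A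

/-- The `κ`-observable diameter of `X` with screen `Y`:
`ObsDiam_Y(X; −κ) = sup {diam (F_*μ_X; 1−κ) : F : X → Y 1-Lipschitz}`. -/
noncomputable def obsDiamScreen (Y : Type*) {X : Type*} [PseudoMetricSpace X]
    [MeasurableSpace X] [PseudoMetricSpace Y] [MeasurableSpace Y]
    (μ : Measure X) (κ : ℝ) : ℝ≥0∞ :=
  ⨆ (F : X → Y) (_ : LipschitzWith 1 F), partialDiam (Measure.map F μ) (1 - κ)

/-!
Given a 1-Lipschitz `F : X → ℓ∞^N`, each coordinate `F i` is a 1-Lipschitz function to `ℝ`,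
so it has a set `A i` of `(F i)_*μ`-measure at least `1 - κ` and diameter nearly at most
`ObsDiam(X; -κ)`. The box `∏ i, A i` has the same sup-diameter bound, and by the union bound its
preimage under `F` has measure at least `1 - Nκ`.
-/

open Set

section PartialDiam

variable {α : Type*} [PseudoEMetricSpace α] [MeasurableSpace α] {ν : Measure α} {a : ℝ}

lemma partialDiam_le_ediam {A : Set α} (hA : MeasurableSet A) (hνA : ENNReal.ofReal a ≤ ν A) :
    partialDiam ν a ≤ Metric.ediam A :=
  iInf₂_le_of_le A hA (iInf_le _ hνA)

lemma exists_measurableSet_ediam_lt_of_partialDiam_lt {r : ℝ≥0∞} (h : partialDiam ν a < r) :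
    ∃ A, MeasurableSet A ∧ ENNReal.ofReal a ≤ ν A ∧ Metric.ediam A < r := by
  obtain ⟨A, hA, hνA, hdiam⟩ : ∃ A, MeasurableSet A ∧ ENNReal.ofReal a ≤ ν A ∧ _ := by
    simpa only [partialDiam, iInf_lt_iff, exists_prop] using h
  exact ⟨A, hA, hνA, hdiam⟩

end PartialDiam

lemma partialDiam_map_le_obsDiamScreen {X Y : Type*} [PseudoMetricSpace X] [MeasurableSpace X]
    [PseudoMetricSpace Y] [MeasurableSpace Y] (μ : Measure X) (κ : ℝ) {f : X → Y}
    (hf : LipschitzWith 1 f) :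
    partialDiam (μ.map f) (1 - κ) ≤ obsDiamScreen Y μ κ :=
  le_iSup₂_of_le (f := fun (f : X → Y) (_ : LipschitzWith 1 f) =>
    partialDiam (μ.map f) (1 - κ)) f hf le_rfl

lemma one_sub_card_mul_le_measureReal_iInter {Ω ι : Type*} [MeasurableSpace Ω] [Fintype ι]
    {μ : Measure Ω} [IsProbabilityMeasure μ] {E : ι → Set Ω} (hE : ∀ i, MeasurableSet (E i))
    {κ : ℝ} (hκ : ∀ i, 1 - κ ≤ μ.real (E i)) :
    1 - Fintype.card ι * κ ≤ μ.real (⋂ i, E i) := by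
  have hunion : μ.real (⋃ i, (E i)ᶜ) ≤ Fintype.card ι * κ := calc
    μ.real (⋃ i, (E i)ᶜ) ≤ ∑ i, μ.real (E i)ᶜ := measureReal_iUnion_fintype_le _
    _ ≤ ∑ _i : ι, κ := Finset.sum_le_sum fun i _ => by
      rw [probReal_compl_eq_one_sub (hE i)]; linarith [hκ i]
    _ = Fintype.card ι * κ := by simp
  rw [← compl_compl (⋂ i, E i), compl_iInter,
    probReal_compl_eq_one_sub (MeasurableSet.iUnion fun i => (hE i).compl)]
  linarith

theorem obsDiamScreen_pi_le_iSup {X ι : Type*} [Fintype ι] {Y : ι → Type*}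
    [PseudoMetricSpace X] [MeasurableSpace X] [OpensMeasurableSpace X]
    [∀ i, PseudoMetricSpace (Y i)] [∀ i, MeasurableSpace (Y i)] [∀ i, BorelSpace (Y i)]
    (μ : Measure X) [IsProbabilityMeasure μ] (κ : ℝ) :
    obsDiamScreen (∀ i, Y i) μ (Fintype.card ι * κ) ≤ ⨆ i, obsDiamScreen (Y i) μ κ := by
  refine iSup₂_le fun F hF => ENNReal.le_of_forall_pos_le_add fun ε hε hfin => ?_
  have hFi (i : ι) : LipschitzWith 1 (F · i) := fun x y =>
    (edist_le_pi_edist (F x) (F y) i).trans (hF x y)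
  have hFim (i : ι) : Measurable (F · i) := (hFi i).continuous.measurable
  have hFm : Measurable F := measurable_pi_iff.mpr hFim
  have hcoord (i : ι) : ∃ A, MeasurableSet A ∧ ENNReal.ofReal (1 - κ) ≤ μ.map (F · i) A ∧
      Metric.ediam A < (⨆ i, obsDiamScreen (Y i) μ κ) + ε :=
    exists_measurableSet_ediam_lt_of_partialDiam_lt <|
      ((partialDiam_map_le_obsDiamScreen μ κ (hFi i)).trans
        (le_iSup (fun i => obsDiamScreen (Y i) μ κ) i)).trans_lt
        (ENNReal.lt_add_right hfin.ne (by exact_mod_cast hε.ne'))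
  choose A hA hμA hdiam using hcoord
  have hAi (i : ι) : 1 - κ ≤ μ.real ((F · i) ⁻¹' A i) := by
    rw [measureReal_def, ← ENNReal.ofReal_le_iff_le_toReal (measure_ne_top _ _),
      ← Measure.map_apply (hFim i) (hA i)]
    exact hμA i
  have hpi : ENNReal.ofReal (1 - Fintype.card ι * κ) ≤ μ.map F (univ.pi A) := by
    rw [Measure.map_apply hFm (MeasurableSet.univ_pi hA), ENNReal.ofReal_le_iff_le_toReal
      (measure_ne_top _ _), ← measureReal_def, univ_pi_eq_iInter, preimage_iInter]
    exact one_sub_card_mul_le_measureReal_iInter (fun i => (hA i).preimage (hFim i)) hAi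
  exact (partialDiam_le_ediam (MeasurableSet.univ_pi hA) hpi).trans
    (Metric.ediam_pi_le_of_le fun i => (hdiam i).le)

theorem obsDiam_linfty_le_obsDiam_general {X : Type*}
    [MetricSpace X]
    [MeasurableSpace X] [BorelSpace X]
    (μ : Measure X) [IsProbabilityMeasure μ]
    (κ : ℝ) (N : ℕ) :
    obsDiamScreen (Fin N → ℝ) μ (N * κ) ≤ obsDiamScreen ℝ μ κ := by
  simpa only [Fintype.card_fin] using
    (obsDiamScreen_pi_le_iSup (Y := fun _ : Fin N => ℝ) μ κ).trans iSup_const_le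

/-- for an mm-space `X`, `κ > 0` and `N : ℕ`, the `Nκ`-observable
diameter of `X` with screen `(ℝ^N, ℓ∞)` (the sup metric on `Fin N → ℝ`) is at most
the `κ`-observable diameter of `X` (with screen `ℝ`). -/
theorem obsDiam_linfty_le_obsDiam {X : Type*}
    [MetricSpace X] [CompleteSpace X] [TopologicalSpace.SeparableSpace X]
    [MeasurableSpace X] [BorelSpace X]
    (μ : Measure X) [IsProbabilityMeasure μ] [μ.IsOpenPosMeasure]
    (κ : ℝ) (hκ : 0 < κ) (N : ℕ) :
    obsDiamScreen (Fin N → ℝ) μ (N * κ) ≤ obsDiamScreen ℝ μ κ :=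
  obsDiam_linfty_le_obsDiam_general μ κ N
end

section
/- For any mm-space X and real numbers κ > κ' > 0: (1) ObsDiam(X; −2κ) ≤ Sep(X; κ, κ), and (2) Sep(X; κ, κ) ≤ ObsDiam(X; −κ'). -/
open MeasureTheory
open scoped ENNReal

/-- The distance `d_X(A, B) = inf {d(x, y) : x ∈ A, y ∈ B}` between two subsets,
valued in `[0, ∞]`. -/
noncomputable def setSep {X : Type*} [PseudoEMetricSpace X] (A B : Set X) : ℝ≥0∞ :=
  ⨅ (x ∈ A) (y ∈ B), edist x y

/-- The separation distance `Sep(X; κ₀, κ₁)`: the supremum of `d_X(A₀, A₁)` over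
Borel sets `A₀, A₁` with `μ(Aᵢ) ≥ κᵢ` (and `0` if no such sets exist). -/
noncomputable def sep2 {X : Type*} [PseudoEMetricSpace X] [MeasurableSpace X]
    (μ : Measure X) (κ₀ κ₁ : ℝ) : ℝ≥0∞ :=
  ⨆ (A₀ : Set X) (A₁ : Set X) (_ : MeasurableSet A₀) (_ : MeasurableSet A₁)
    (_ : ENNReal.ofReal κ₀ ≤ μ A₀) (_ : ENNReal.ofReal κ₁ ≤ μ A₁), setSep A₀ A₁

/-- The `κ`-observable diameter `ObsDiam(X; −κ)`. -/
noncomputable def obsDiam {X : Type*} [PseudoMetricSpace X] [MeasurableSpace X]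
    (μ : Measure X) (κ : ℝ) : ℝ≥0∞ :=
  ⨆ (f : X → ℝ) (_ : LipschitzWith 1 f), partialDiam (Measure.map f μ) (1 - κ)

/-!
For a 1-Lipschitz `f`, take a lower `κ`-quantile `a` and an upper `κ`-quantile `b` of `f_*μ`:
the interval `[a, b]` carries mass at least `1 - 2κ`, while `f ⁻¹' (-∞, a]` and `f ⁻¹' [b, ∞)`
both have mass at least `κ` and lie at distance at least `b - a`. Conversely, if `A₀, A₁` have mass
at least `κ > κ'`, every set of `(d(·, A₀))_*μ`-mass at least `1 - κ'` meets the images of both,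
namely `0` and a value at least `d(A₀, A₁)`.
-/

open Set Filter Topology ProbabilityTheory Function

lemma setSep_le_infEDist {X : Type*} [PseudoEMetricSpace X] {A B : Set X} {y : X} (hy : y ∈ B) :
    setSep A B ≤ Metric.infEDist y A :=
  le_iInf₂ fun x hx => (iInf₂_le x hx).trans ((iInf₂_le y hy).trans (edist_comm x y).le)

lemma ofReal_sub_le_setSep_preimage {X : Type*} [PseudoEMetricSpace X] {f : X → ℝ}
    (hf : LipschitzWith 1 f) (a b : ℝ) :
    ENNReal.ofReal (b - a) ≤ setSep (f ⁻¹' Iic a) (f ⁻¹' Ici b) :=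
  le_iInf₂ fun x hx => le_iInf₂ fun y hy => calc
    ENNReal.ofReal (b - a) ≤ ENNReal.ofReal (dist (f x) (f y)) := by
      refine ENNReal.ofReal_le_ofReal ?_
      rw [Real.dist_eq, abs_sub_comm]
      exact (sub_le_sub hy hx).trans (le_abs_self _)
    _ = edist (f x) (f y) := (edist_dist _ _).symm
    _ ≤ edist x y := by simpa using hf.edist_le_mul x y

lemma le_sep2 {X : Type*} [PseudoEMetricSpace X] [MeasurableSpace X]
    {μ : Measure X} {κ₀ κ₁ : ℝ} {A₀ A₁ : Set X} (h₀ : MeasurableSet A₀) (h₁ : MeasurableSet A₁)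
    (hm₀ : ENNReal.ofReal κ₀ ≤ μ A₀) (hm₁ : ENNReal.ofReal κ₁ ≤ μ A₁) :
    setSep A₀ A₁ ≤ sep2 μ κ₀ κ₁ :=
  le_iSup₂_of_le A₀ A₁ <| le_iSup₂_of_le h₀ h₁ <| le_iSup₂_of_le (f := fun _ _ => setSep A₀ A₁)
    hm₀ hm₁ le_rfl

lemma partialDiam_le {α : Type*} [PseudoEMetricSpace α] [MeasurableSpace α]
    {ν : Measure α} {a : ℝ} {A : Set α} (hA : MeasurableSet A)
    (h : ENNReal.ofReal a ≤ ν A) : partialDiam ν a ≤ Metric.ediam A :=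
  iInf₂_le_of_le A hA (iInf_le _ h)

lemma partialDiam_of_nonpos {α : Type*} [PseudoEMetricSpace α] [MeasurableSpace α]
    (ν : Measure α) {a : ℝ} (ha : a ≤ 0) : partialDiam ν a = 0 :=
  le_antisymm ((partialDiam_le MeasurableSet.empty (by simp [ha])).trans_eq Metric.ediam_empty)
    bot_le

theorem StieltjesFunction.exists_le_apply_and_leftLim_le (f : StieltjesFunction ℝ) {c : ℝ}
    (hbot : ∃ t, f t < c) (htop : ∃ t, c ≤ f t) : ∃ a, c ≤ f a ∧ leftLim f a ≤ c := by
  obtain ⟨t₀, ht₀⟩ := hbot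
  have hS : BddBelow {t | c ≤ f t} :=
    ⟨t₀, fun s hs => le_of_not_gt fun hst => (le_trans hs (f.mono hst.le)).not_gt ht₀⟩
  refine ⟨sInf {t | c ≤ f t}, ?_, ?_⟩
  · refine ge_of_tendsto ((f.right_continuous _).mono Ioi_subset_Ici_self) ?_
    filter_upwards [self_mem_nhdsWithin] with t ht
    obtain ⟨s, hs, hst⟩ := exists_lt_of_csInf_lt htop ht
    exact le_trans hs (f.mono hst.le)
  · refine le_of_tendsto (f.mono.tendsto_leftLim _) ?_
    filter_upwards [self_mem_nhdsWithin] with t ht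
    exact (not_le.mp fun hct => (csInf_le hS hct).not_gt ht).le

lemma exists_le_cdf_and_leftLim_cdf_le (ν : Measure ℝ) {c : ℝ} (h0 : 0 < c) (h1 : c < 1) :
    ∃ a, c ≤ cdf ν a ∧ leftLim (cdf ν) a ≤ c :=
  (cdf ν).exists_le_apply_and_leftLim_le ((tendsto_cdf_atBot ν).eventually_lt_const h0).exists
    ((tendsto_cdf_atTop ν).eventually_const_le h1).exists

lemma partialDiam_map_le_sep2 {X : Type*} [PseudoEMetricSpace X] [MeasurableSpace X]
    [OpensMeasurableSpace X] (μ : Measure X) [IsProbabilityMeasure μ] {f : X → ℝ}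
    (hf : LipschitzWith 1 f) {κ : ℝ} (hκ : 0 < κ) :
    partialDiam (μ.map f) (1 - 2 * κ) ≤ sep2 μ κ κ := by
  rcases le_or_gt (1 - 2 * κ) 0 with hle | hlt
  · rw [partialDiam_of_nonpos _ hle]
    exact bot_le
  have hfm : Measurable f := hf.continuous.measurable
  have : IsProbabilityMeasure (μ.map f) := Measure.isProbabilityMeasure_map hfm.aemeasurable
  set F := cdf (μ.map f)
  have hF : F.measure = μ.map f := measure_cdf _
  obtain ⟨a, haF, haF'⟩ := exists_le_cdf_and_leftLim_cdf_le (μ.map f) hκ (by linarith)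
  obtain ⟨b, hbF, hbF'⟩ := exists_le_cdf_and_leftLim_cdf_le (μ.map f) (c := 1 - κ)
    (by linarith) (by linarith)
  have hIic : μ (f ⁻¹' Iic a) = ENNReal.ofReal (F a) := by
    rw [← Measure.map_apply hfm measurableSet_Iic, ofReal_cdf]
  have hIci : μ (f ⁻¹' Ici b) = ENNReal.ofReal (1 - leftLim F b) := by
    rw [← Measure.map_apply hfm measurableSet_Ici, ← hF, F.measure_Ici (tendsto_cdf_atTop _)]
  have hIcc : μ.map f (Icc a b) = ENNReal.ofReal (F b - leftLim F a) := by
    rw [← hF, F.measure_Icc]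
  calc partialDiam (μ.map f) (1 - 2 * κ) ≤ Metric.ediam (Icc a b) :=
        partialDiam_le measurableSet_Icc (hIcc ▸ ENNReal.ofReal_le_ofReal (by linarith))
    _ = ENNReal.ofReal (b - a) := Real.ediam_Icc a b
    _ ≤ setSep (f ⁻¹' Iic a) (f ⁻¹' Ici b) := ofReal_sub_le_setSep_preimage hf a b
    _ ≤ sep2 μ κ κ := le_sep2 (hfm measurableSet_Iic) (hfm measurableSet_Ici)
        (hIic ▸ ENNReal.ofReal_le_ofReal haF) (hIci ▸ ENNReal.ofReal_le_ofReal (by linarith))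

lemma obsDiam_le_sep2 {X : Type*} [PseudoMetricSpace X] [MeasurableSpace X]
    [OpensMeasurableSpace X] (μ : Measure X) [IsProbabilityMeasure μ] {κ : ℝ} (hκ : 0 < κ) :
    obsDiam μ (2 * κ) ≤ sep2 μ κ κ :=
  iSup₂_le fun _ hf => partialDiam_map_le_sep2 μ hf hκ

lemma nonempty_inter_preimage_of_le_measure_map {X Y : Type*} [MeasurableSpace X]
    [MeasurableSpace Y] (μ : Measure X) [IsProbabilityMeasure μ] {f : X → Y} (hf : Measurable f)
    {A : Set Y} {B : Set X} {κ κ' : ℝ} (hA : MeasurableSet A)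
    (hνA : ENNReal.ofReal (1 - κ') ≤ μ.map f A) (hμB : ENNReal.ofReal κ ≤ μ B) (hκ : κ' < κ) :
    (B ∩ f ⁻¹' A).Nonempty := by
  refine nonempty_inter_of_measure_lt_add μ (hf hA) (subset_univ _) (subset_univ _) ?_
  rw [measure_univ, ← Measure.map_apply hf hA]
  calc (1 : ℝ≥0∞) < ENNReal.ofReal (κ + (1 - κ')) := by
        rw [← ENNReal.ofReal_one]; exact ENNReal.ofReal_lt_ofReal_iff'.2 ⟨by linarith, by linarith⟩
    _ ≤ ENNReal.ofReal κ + ENNReal.ofReal (1 - κ') := ENNReal.ofReal_add_le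
    _ ≤ μ B + μ.map f A := add_le_add hμB hνA

lemma sep2_le_obsDiam {X : Type*} [PseudoMetricSpace X] [MeasurableSpace X]
    [OpensMeasurableSpace X] (μ : Measure X) [IsProbabilityMeasure μ] {κ κ' : ℝ}
    (hκ : κ' < κ) : sep2 μ κ κ ≤ obsDiam μ κ' := by
  refine iSup₂_le fun A₀ A₁ => iSup₂_le fun hA₀ hA₁ => iSup₂_le fun hm₀ hm₁ => ?_
  set f : X → ℝ := (Metric.infDist · A₀)
  have hf : LipschitzWith 1 f := Metric.lipschitz_infDist_pt A₀
  refine le_iSup₂_of_le f hf (le_iInf₂ fun A hA => le_iInf fun hνA => ?_)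
  obtain ⟨x₀, hx₀, h₀⟩ :=
    nonempty_inter_preimage_of_le_measure_map μ hf.continuous.measurable hA hνA hm₀ hκ
  obtain ⟨x₁, hx₁, h₁⟩ :=
    nonempty_inter_preimage_of_le_measure_map μ hf.continuous.measurable hA hνA hm₁ hκ
  calc setSep A₀ A₁ ≤ Metric.infEDist x₁ A₀ := setSep_le_infEDist hx₁
    _ = ENNReal.ofReal (Metric.infDist x₁ A₀) :=
      (ENNReal.ofReal_toReal (Metric.infEDist_ne_top ⟨x₀, hx₀⟩)).symm
    _ = edist (f x₀) (f x₁) := by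
      rw [edist_dist, show f x₀ = 0 from Metric.infDist_zero_of_mem hx₀, dist_zero_left,
        Real.norm_of_nonneg Metric.infDist_nonneg]
    _ ≤ Metric.ediam A := Metric.edist_le_ediam_of_mem h₀ h₁

theorem obsDiam_sep_obsDiam_general {X : Type*}
    [MetricSpace X]
    [MeasurableSpace X] [BorelSpace X]
    (μ : Measure X) [IsProbabilityMeasure μ]
    (κ κ' : ℝ) (hκ' : 0 < κ') (hκ : κ' < κ) :
    obsDiam μ (2 * κ) ≤ sep2 μ κ κ ∧ sep2 μ κ κ ≤ obsDiam μ κ' :=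
  ⟨obsDiam_le_sep2 μ (hκ'.trans hκ), sep2_le_obsDiam μ hκ⟩

/-- for any mm-space `X` and reals `κ > κ' > 0`:
(1) `ObsDiam(X; −2κ) ≤ Sep(X; κ, κ)`; (2) `Sep(X; κ, κ) ≤ ObsDiam(X; −κ')`. -/
theorem obsDiam_sep_obsDiam {X : Type*}
    [MetricSpace X] [CompleteSpace X] [TopologicalSpace.SeparableSpace X]
    [MeasurableSpace X] [BorelSpace X]
    (μ : Measure X) [IsProbabilityMeasure μ] [μ.IsOpenPosMeasure]
    (κ κ' : ℝ) (hκ' : 0 < κ') (hκ : κ' < κ) :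
    obsDiam μ (2 * κ) ≤ sep2 μ κ κ ∧ sep2 μ κ κ ≤ obsDiam μ κ' :=
  obsDiam_sep_obsDiam_general μ κ κ' hκ' hκ
end

section
/- Let X be a compact Riemannian manifold with normalized volume measure, and let λ_k(X) denote the k-th eigenvalue of the Laplacian. Then for any κ₀, κ₁, …, κ_k > 0, Sep(X; κ₀, κ₁, …, κ_k) ≤ 2 / √(λ_k(X) · min_i κ_i). -/
open MeasureTheory Filter
open scoped ENNReal Topology

/-- The pointwise slope (local Lipschitz constant)
`|grad f|(x) = limsup_{y → x, y ≠ x} |f(y) − f(x)| / d(y, x)`. -/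
noncomputable def gradNorm {X : Type*} [MetricSpace X] (f : X → ℝ) (x : X) : ℝ :=
  limsup (fun y => |f y - f x| / dist y x) (𝓝[≠] x)

/-- The Dirichlet energy `E(f) = ∫ |grad f|² dμ`. -/
noncomputable def energy {X : Type*} [MetricSpace X] [MeasurableSpace X]
    (μ : Measure X) (f : X → ℝ) : ℝ :=
  ∫ x, (gradNorm f x) ^ 2 ∂μ

/-- The Rayleigh quotient `R(f) = ‖grad f‖²_{L₂} / ‖f‖²_{L₂}`. -/
noncomputable def rayleigh {X : Type*} [MetricSpace X] [MeasurableSpace X]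
    (μ : Measure X) (f : X → ℝ) : ℝ :=
  energy μ f / ∫ x, (f x) ^ 2 ∂μ

/-- The `k`-th eigenvalue of the Laplacian, via the min-max principle:
`λ_k = inf_L sup {R(u) : u ∈ L \ {0}}` where `L` runs over all
`(k+1)`-dimensional subspaces of `L₂(X) ∩ Lip(X)`. -/
noncomputable def lambdaK {X : Type*} [MetricSpace X] [MeasurableSpace X]
    (μ : Measure X) (k : ℕ) : ℝ :=
  sInf { r : ℝ | ∃ L : Submodule ℝ (X → ℝ),
    Module.finrank ℝ L = k + 1 ∧
    (∀ f ∈ L, (∃ C : NNReal, LipschitzWith C f) ∧ MemLp f 2 μ) ∧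
    r = sSup { s : ℝ | ∃ f ∈ L, f ≠ (0 : X → ℝ) ∧ s = rayleigh μ f } }

/-- The separation distance `Sep(X; κ₀, …, κ_n)`: the supremum of
`min_{i ≠ j} d_X(A_i, A_j)` over Borel sets with `μ(A_i) ≥ κ_i`. -/
noncomputable def sepFam {X : Type*} [PseudoEMetricSpace X] [MeasurableSpace X]
    (μ : Measure X) {n : ℕ} (κ : Fin n → ℝ) : ℝ≥0∞ :=
  ⨆ (A : Fin n → Set X) (_ : ∀ i, MeasurableSet (A i))
    (_ : ∀ i, ENNReal.ofReal (κ i) ≤ μ (A i)),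
    ⨅ (i : Fin n) (j : Fin n) (_ : i ≠ j), setSep (A i) (A j)

/-! If `A₀, …, A_k` have measure `≥ κ` and are pairwise `δ`-apart, the bumps
`fᵢ = max (1 - d(·, Aᵢ) / (δ/2)) 0` equal `1` on `Aᵢ`, are `2/δ`-Lipschitz and have disjoint
supports. Near any point a combination `∑ cᵢ fᵢ` therefore agrees with a single `cᵢ fᵢ`, so its
slope is at most `(2/δ) maxᵢ |cᵢ|`, while its squared `L²` norm is at least `κ ∑ cᵢ²`. The `fᵢ`
span a `(k+1)`-dimensional space on which the Rayleigh quotient is `≤ 4 / (δ² κ)`, so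
`λ_k ≤ 4 / (δ² κ)`, that is `δ ≤ 2 / √(λ_k κ)`. -/

open Metric Function
open scoped NNReal

section

variable {X : Type*}

theorem sq_norm_le_sum_sq {ι : Type*} [Fintype ι] (c : ι → ℝ) : ‖c‖ ^ 2 ≤ ∑ i, c i ^ 2 :=
  (Real.le_sqrt (norm_nonneg c) (Finset.sum_nonneg fun i _ => sq_nonneg (c i))).1 <|
    (pi_norm_le_iff_of_nonneg (Real.sqrt_nonneg _)).2 fun i =>
      Real.abs_le_sqrt (Finset.single_le_sum (fun j _ => sq_nonneg (c j)) (Finset.mem_univ i))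

theorem sum_measureReal_mul_le_integral [MeasurableSpace X] {μ : Measure X} {ι : Type*}
    [Fintype ι] {A : ι → Set X} (hA : ∀ i, MeasurableSet (A i)) (hdisj : Pairwise (Disjoint on A))
    {g : X → ℝ} (hg0 : 0 ≤ g) (hg : Integrable g μ) {c : ι → ℝ}
    (hgc : ∀ i, ∀ x ∈ A i, g x = c i) : ∑ i, μ.real (A i) * c i ≤ ∫ x, g x ∂μ :=
  calc ∑ i, μ.real (A i) * c i = ∑ i, ∫ x in A i, g x ∂μ := Finset.sum_congr rfl fun i _ => by
        rw [setIntegral_congr_fun (hA i) (hgc i), setIntegral_const, smul_eq_mul]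
    _ = ∫ x in ⋃ i, A i, g x ∂μ := (integral_iUnion_fintype hA hdisj fun _ => hg.integrableOn).symm
    _ ≤ ∫ x, g x ∂μ := setIntegral_le_integral hg (Eventually.of_forall hg0)

section Slope

variable [MetricSpace X] {f : X → ℝ} {K : ℝ}

theorem abs_gradNorm_le {x : X} (hK : 0 ≤ K)
    (hf : ∀ᶠ y in 𝓝 x, |f y - f x| ≤ K * dist y x) : |gradNorm f x| ≤ K := by
  have hle : ∀ᶠ y in 𝓝[≠] x, |f y - f x| / dist y x ≤ K :=
    (hf.filter_mono nhdsWithin_le_nhds).mono fun y hy => div_le_of_le_mul₀ dist_nonneg hK hy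
  have hnonneg : ∀ y, 0 ≤ |f y - f x| / dist y x := fun y => by positivity
  rcases eq_or_neBot (𝓝[≠] x) with hbot | _
  -- at an isolated point the limsup is `sInf univ = 0`
  · simpa [gradNorm, hbot, limsup_eq] using hK
  · have h0 : 0 ≤ gradNorm f x :=
      le_limsup_of_frequently_le (Frequently.of_forall hnonneg) ⟨K, hle⟩
    have h1 : gradNorm f x ≤ K :=
      limsup_le_of_le (isCoboundedUnder_le_of_le _ hnonneg) hle
    exact abs_le.2 ⟨by linarith, h1⟩

theorem energy_le_sq [MeasurableSpace X] (μ : Measure X) [IsProbabilityMeasure μ] (hK : 0 ≤ K)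
    (hf : ∀ x, ∀ᶠ y in 𝓝 x, |f y - f x| ≤ K * dist y x) : energy μ f ≤ K ^ 2 := by
  have hpt : ∀ x, gradNorm f x ^ 2 ≤ K ^ 2 := fun x => by
    simpa using pow_le_pow_left₀ (abs_nonneg _) (abs_gradNorm_le hK (hf x)) 2
  by_cases hint : Integrable (fun x => gradNorm f x ^ 2) μ
  · exact (integral_mono hint (integrable_const (K ^ 2)) hpt).trans_eq (by simp)
  · rw [energy, integral_undef hint]
    positivity

end Slope

theorem eventually_abs_sum_smul_sub_le [PseudoMetricSpace X] {ι : Type*} [Fintype ι]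
    {F : ι → X → ℝ} {K : ℝ≥0} (hF : ∀ i, LipschitzWith K (F i))
    (hdisj : Pairwise (Disjoint on fun i => support (F i))) (c : ι → ℝ) (x : X) :
    ∀ᶠ y in 𝓝 x, |(∑ i, c i • F i) y - (∑ i, c i • F i) x| ≤ ‖c‖ * K * dist y x := by
  simp only [Finset.sum_apply, Pi.smul_apply, smul_eq_mul]
  have hsingle : ∀ i y, (∀ j ≠ i, F j x = 0 ∧ F j y = 0) →
      |∑ i, c i * F i y - ∑ i, c i * F i x| ≤ ‖c‖ * K * dist y x := fun i y h => by
    rw [Fintype.sum_eq_single i fun j hj => by simp [(h j hj).2],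
      Fintype.sum_eq_single i fun j hj => by simp [(h j hj).1], ← mul_sub, abs_mul, mul_assoc]
    exact mul_le_mul (norm_le_pi_norm c i) ((hF i).dist_le_mul y x) (abs_nonneg _) (norm_nonneg _)
  have hvanish : ∀ {i j z}, i ≠ j → F i z ≠ 0 → F j z = 0 := fun hij hi =>
    not_not.1 (Set.disjoint_left.1 (hdisj hij) hi)
  by_cases hx : ∃ i, F i x ≠ 0
  · obtain ⟨i, hi⟩ := hx
    filter_upwards [(hF i).continuous.isOpen_support.mem_nhds hi] with y hy
    exact hsingle i y fun j hj => ⟨hvanish hj.symm hi, hvanish hj.symm hy⟩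
  · simp only [not_exists, not_not] at hx
    refine Eventually.of_forall fun y => ?_
    by_cases hy : ∃ j, F j y ≠ 0
    · obtain ⟨j, hj⟩ := hy
      exact hsingle j y fun i hi => ⟨hx i, hvanish hi.symm hj⟩
    · simp only [not_exists, not_not] at hy
      simp only [hx, hy, mul_zero, Finset.sum_const_zero, sub_zero, abs_zero]
      positivity

def lipschitzL2 [PseudoMetricSpace X] [MeasurableSpace X] (μ : Measure X) :
    Submodule ℝ (X → ℝ) where
  carrier := {f | (∃ C : ℝ≥0, LipschitzWith C f) ∧ MemLp f 2 μ}
  zero_mem' := ⟨⟨0, LipschitzWith.const 0⟩, MemLp.zero⟩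
  add_mem' := by
    rintro f g ⟨⟨C, hC⟩, hf⟩ ⟨⟨D, hD⟩, hg⟩
    exact ⟨⟨C + D, hC.add hD⟩, hf.add hg⟩
  smul_mem' := by
    rintro c f ⟨⟨C, hC⟩, hf⟩
    exact ⟨⟨‖c‖₊ * C, (lipschitzWith_smul c).comp hC⟩, hf.const_smul c⟩

section Spectral

variable [MetricSpace X] [MeasurableSpace X]

theorem rayleigh_nonneg (μ : Measure X) (f : X → ℝ) : 0 ≤ rayleigh μ f :=
  div_nonneg (integral_nonneg fun _ => sq_nonneg _) (integral_nonneg fun _ => sq_nonneg _)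

theorem rayleigh_le_of_energy_le {μ : Measure X} {f : X → ℝ} {a b : ℝ} (ha : 0 ≤ a) (hb : 0 < b)
    (hE : energy μ f ≤ a * b) (hb_le : b ≤ ∫ x, f x ^ 2 ∂μ) : rayleigh μ f ≤ a := by
  rw [rayleigh, div_le_iff₀ (hb.trans_le hb_le)]
  exact hE.trans (mul_le_mul_of_nonneg_left hb_le ha)

theorem lambdaK_le_of_forall_rayleigh_le {μ : Measure X} {k : ℕ} {L : Submodule ℝ (X → ℝ)}
    (hrank : Module.finrank ℝ L = k + 1) (hL : L ≤ lipschitzL2 μ) {r : ℝ} (hr : 0 ≤ r)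
    (hR : ∀ f ∈ L, f ≠ 0 → rayleigh μ f ≤ r) : lambdaK μ k ≤ r := by
  rw [lambdaK]
  refine csInf_le_of_le ?_ ⟨L, hrank, fun _ hf => hL hf, rfl⟩ ?_
  · refine ⟨0, ?_⟩
    rintro _ ⟨L', -, -, rfl⟩
    exact Real.sSup_nonneg (by rintro _ ⟨f, -, -, rfl⟩; exact rayleigh_nonneg μ f)
  · exact Real.sSup_le (by rintro _ ⟨f, hf, hf0, rfl⟩; exact hR f hf hf0) hr

end Spectral

section Bump

variable [PseudoMetricSpace X] {A B : Set X} {r : ℝ≥0}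

noncomputable def bump (A : Set X) (r : ℝ≥0) (x : X) : ℝ := max (1 - infDist x A / r) 0

theorem bump_eq_one {x : X} (hx : x ∈ A) : bump A r x = 1 := by
  simp [bump, infDist_zero_of_mem hx]

theorem abs_bump_le_one (x : X) : |bump A r x| ≤ 1 := by
  have : 0 ≤ infDist x A / r := div_nonneg infDist_nonneg r.2
  rw [abs_of_nonneg (le_max_right _ _)]
  exact max_le (by linarith) zero_le_one

theorem lipschitzWith_bump (A : Set X) : LipschitzWith r⁻¹ (bump A r) := by
  refine LipschitzWith.of_dist_le_mul fun x y => ?_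
  have hxy := (lipschitz_infDist_pt A).dist_le_mul x y
  rw [NNReal.coe_one, one_mul, Real.dist_eq] at hxy
  calc dist (bump A r x) (bump A r y)
      ≤ |(1 - infDist x A / r) - (1 - infDist y A / r)| := abs_max_sub_max_le_abs _ _ _
    _ = |infDist x A - infDist y A| / r := by
        rw [sub_sub_sub_cancel_left, ← sub_div, abs_div, NNReal.abs_eq, abs_sub_comm]
    _ ≤ r⁻¹ * dist x y := by
        rw [NNReal.coe_inv, div_eq_inv_mul]
        gcongr

theorem disjoint_support_bump (hr : 0 < r) (hA : A.Nonempty) (hB : B.Nonempty)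
    (hAB : ∀ a ∈ A, ∀ b ∈ B, 2 * r ≤ dist a b) :
    Disjoint (support (bump A r)) (support (bump B r)) := by
  have hlt : ∀ {C : Set X} {x : X}, C.Nonempty → bump C r x ≠ 0 → ∃ c ∈ C, dist x c < r :=
    fun hC hx => by
      refine (infDist_lt_iff hC).1 (not_le.1 fun h => hx (max_eq_right ?_))
      exact sub_nonpos.2 ((one_le_div (NNReal.coe_pos.2 hr)).2 h)
  refine Set.disjoint_left.2 fun x hxA hxB => ?_
  obtain ⟨a, ha, hxa⟩ := hlt hA hxA
  obtain ⟨b, hb, hxb⟩ := hlt hB hxB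
  have := dist_triangle_left a b x
  linarith [hAB a ha b hb]

theorem bump_mem_lipschitzL2 [MeasurableSpace X] [OpensMeasurableSpace X] (μ : Measure X)
    [IsFiniteMeasure μ] (A : Set X) : bump A r ∈ lipschitzL2 μ :=
  ⟨⟨_, lipschitzWith_bump A⟩,
    MemLp.of_bound (lipschitzWith_bump A).continuous.aestronglyMeasurable 1
      (Eventually.of_forall fun x => abs_bump_le_one x)⟩

end Bump

section BumpFamily

variable [PseudoMetricSpace X] {ι : Type*} {A : ι → Set X} {r : ℝ≥0}

theorem pairwise_disjoint_support_bump (hr : 0 < r) (hne : ∀ i, (A i).Nonempty)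
    (hsep : Pairwise fun i j => ∀ x ∈ A i, ∀ y ∈ A j, 2 * r ≤ dist x y) :
    Pairwise (Disjoint on fun i => support (bump (A i) r)) := fun _ _ hij =>
  disjoint_support_bump hr (hne _) (hne _) (hsep hij)

theorem sum_smul_bump_apply_of_mem [Fintype ι] (hr : 0 < r) (hne : ∀ i, (A i).Nonempty)
    (hsep : Pairwise fun i j => ∀ x ∈ A i, ∀ y ∈ A j, 2 * r ≤ dist x y) (c : ι → ℝ) {i : ι}
    {x : X} (hx : x ∈ A i) : (∑ j, c j • bump (A j) r) x = c i := by
  have hi : bump (A i) r x ≠ 0 := by simp [bump_eq_one hx]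
  simp only [Finset.sum_apply, Pi.smul_apply, smul_eq_mul]
  rw [Fintype.sum_eq_single i fun j hj => ?_, bump_eq_one hx, mul_one]
  rw [not_not.1 (Set.disjoint_left.1 (pairwise_disjoint_support_bump hr hne hsep hj.symm) hi),
    mul_zero]

theorem linearIndependent_bump [Fintype ι] (hr : 0 < r) (hne : ∀ i, (A i).Nonempty)
    (hsep : Pairwise fun i j => ∀ x ∈ A i, ∀ y ∈ A j, 2 * r ≤ dist x y) :
    LinearIndependent ℝ fun i => bump (A i) r :=
  Fintype.linearIndependent_iff.2 fun c hc i => by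
    obtain ⟨x, hx⟩ := hne i
    rw [← sum_smul_bump_apply_of_mem hr hne hsep c hx, hc, Pi.zero_apply]

end BumpFamily

theorem energy_sum_smul_bump_le [MetricSpace X] [MeasurableSpace X] (μ : Measure X)
    [IsProbabilityMeasure μ] {ι : Type*} [Fintype ι] {A : ι → Set X} {r : ℝ≥0} (hr : 0 < r)
    (hne : ∀ i, (A i).Nonempty) (hsep : Pairwise fun i j => ∀ x ∈ A i, ∀ y ∈ A j, 2 * r ≤ dist x y)
    (c : ι → ℝ) : energy μ (∑ i, c i • bump (A i) r) ≤ (‖c‖ / r) ^ 2 := by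
  rw [div_eq_mul_inv, ← NNReal.coe_inv]
  exact energy_le_sq μ (by positivity) fun x => eventually_abs_sum_smul_sub_le
    (fun i => lipschitzWith_bump (A i)) (pairwise_disjoint_support_bump hr hne hsep) c x

theorem lambdaK_le_of_separated [MetricSpace X] [MeasurableSpace X] [OpensMeasurableSpace X]
    (μ : Measure X) [IsProbabilityMeasure μ] {k : ℕ} {A : Fin (k + 1) → Set X}
    (hA : ∀ i, MeasurableSet (A i)) {κ : ℝ} (hκ : 0 < κ) (hμA : ∀ i, ENNReal.ofReal κ ≤ μ (A i))
    {δ : ℝ≥0} (hδ : 0 < δ) (hsep : Pairwise fun i j => ∀ x ∈ A i, ∀ y ∈ A j, (δ : ℝ) ≤ dist x y) :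
    lambdaK μ k ≤ 4 / (δ ^ 2 * κ) := by
  have hr : 0 < δ / 2 := half_pos hδ
  have hne : ∀ i, (A i).Nonempty := fun i =>
    nonempty_of_measure_ne_zero ((ENNReal.ofReal_pos.2 hκ).trans_le (hμA i)).ne'
  have hsep' : Pairwise fun i j => ∀ x ∈ A i, ∀ y ∈ A j, 2 * (δ / 2 : ℝ≥0) ≤ dist x y :=
    fun i j hij x hx y hy => by
      push_cast
      linarith [hsep hij x hx y hy]
  have hAdisj : Pairwise (Disjoint on A) := fun i j hij =>
    Set.disjoint_left.2 fun x hi hj => (hsep hij x hi x hj).not_gt (by simpa using hδ)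
  set L := Submodule.span ℝ (Set.range fun i => bump (A i) (δ / 2))
  have hL : L ≤ lipschitzL2 μ :=
    Submodule.span_le.2 <| Set.range_subset_iff.2 fun i => bump_mem_lipschitzL2 μ (A i)
  have hrank : Module.finrank ℝ L = k + 1 := by
    rw [finrank_span_eq_card (linearIndependent_bump hr hne hsep'), Fintype.card_fin]
  refine lambdaK_le_of_forall_rayleigh_le hrank hL (by positivity) fun f hf hf0 => ?_
  obtain ⟨c, rfl⟩ := (Submodule.mem_span_range_iff_exists_fun ℝ).1 hf
  have hc : 0 < ∑ i, c i ^ 2 := by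
    have hc0 : c ≠ 0 := by
      rintro rfl
      exact hf0 (by simp)
    exact (pow_pos (norm_pos_iff.2 hc0) 2).trans_le (sq_norm_le_sum_sq c)
  refine rayleigh_le_of_energy_le (b := κ * ∑ i, c i ^ 2) (by positivity) (by positivity) ?_ ?_
  · calc energy μ _ ≤ (‖c‖ / (δ / 2 : ℝ≥0)) ^ 2 := energy_sum_smul_bump_le μ hr hne hsep' c
      _ = 4 / δ ^ 2 * ‖c‖ ^ 2 := by push_cast; ring
      _ ≤ 4 / δ ^ 2 * ∑ i, c i ^ 2 := by gcongr; exact sq_norm_le_sum_sq c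
      _ = 4 / (δ ^ 2 * κ) * (κ * ∑ i, c i ^ 2) := by field_simp
  · calc κ * ∑ i, c i ^ 2 ≤ ∑ i, μ.real (A i) * c i ^ 2 := by
          rw [Finset.mul_sum]
          gcongr with i
          exact (ENNReal.ofReal_le_iff_le_toReal (measure_ne_top μ _)).1 (hμA i)
      _ ≤ ∫ x, (∑ i, c i • bump (A i) (δ / 2)) x ^ 2 ∂μ :=
          sum_measureReal_mul_le_integral hA hAdisj (fun x => sq_nonneg _) (hL hf).2.integrable_sq
            fun i x hx => by rw [sum_smul_bump_apply_of_mem hr hne hsep' c hx]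

theorem ofReal_le_setSep_iff [PseudoMetricSpace X] {A B : Set X} {d : ℝ} :
    ENNReal.ofReal d ≤ setSep A B ↔ ∀ x ∈ A, ∀ y ∈ B, d ≤ dist x y := by
  simp only [setSep, le_iInf_iff, edist_dist, ENNReal.ofReal_le_ofReal_iff dist_nonneg]

theorem coe_le_two_div_sqrt_of_le_four_div {l κ : ℝ} {δ : ℝ≥0} (hκ : 0 < κ) (hδ : 0 < δ)
    (h : l ≤ 4 / (δ ^ 2 * κ)) : (δ : ℝ≥0∞) ≤ 2 / ENNReal.ofReal √(l * κ) := by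
  have h4 : l * κ * δ ^ 2 ≤ 2 ^ 2 := by
    rw [le_div_iff₀ (by positivity)] at h
    linarith
  have hmul : (δ : ℝ) * √(l * κ) ≤ 2 := calc
    (δ : ℝ) * √(l * κ) = √(l * κ * δ ^ 2) := by
        rw [Real.sqrt_mul' _ (sq_nonneg _), Real.sqrt_sq δ.coe_nonneg, mul_comm]
    _ ≤ √(2 ^ 2) := Real.sqrt_le_sqrt h4
    _ = 2 := Real.sqrt_sq zero_le_two
  rw [ENNReal.le_div_iff_mul_le (Or.inr two_ne_zero) (Or.inr ENNReal.ofNat_ne_top),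
    ← ENNReal.ofReal_coe_nnreal, ← ENNReal.ofReal_mul δ.coe_nonneg]
  simpa using ENNReal.ofReal_le_ofReal hmul

end

theorem sep_le_two_div_sqrt_lambdaK_general {X : Type*}
    [MetricSpace X] [MeasurableSpace X] [BorelSpace X]
    (μ : Measure X) [IsProbabilityMeasure μ]
    (k : ℕ) (κ : Fin (k + 1) → ℝ) (hκ : ∀ i, 0 < κ i) :
    sepFam μ κ ≤ (2 : ℝ≥0∞) / ENNReal.ofReal (Real.sqrt (lambdaK μ k * ⨅ i, κ i)) := by
  have hκmin : 0 < ⨅ i, κ i := by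
    obtain ⟨i, hi⟩ := exists_eq_ciInf_of_finite (f := κ)
    exact hi ▸ hκ i
  refine iSup_le fun A => iSup_le fun hA => iSup_le fun hμA =>
    ENNReal.le_of_forall_pos_nnreal_lt fun δ hδ hδA => ?_
  have hsep : Pairwise fun i j => ∀ x ∈ A i, ∀ y ∈ A j, (δ : ℝ) ≤ dist x y := fun i j hij =>
    ofReal_le_setSep_iff.1 <| ENNReal.ofReal_coe_nnreal.trans_le <|
      hδA.le.trans (iInf₂_le_of_le i j (iInf_le _ hij))
  have hμA' : ∀ i, ENNReal.ofReal (⨅ i, κ i) ≤ μ (A i) := fun i =>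
    (ENNReal.ofReal_le_ofReal (ciInf_le (Set.finite_range κ).bddBelow i)).trans (hμA i)
  exact coe_le_two_div_sqrt_of_le_four_div hκmin hδ
    (lambdaK_le_of_separated μ hA hκmin hμA' hδ hsep)

/-- for a compact Riemannian manifold `X` with normalized volume
measure (formalized as a compact metric measure space, with `λ_k` given by the
min-max principle as in the source), and any `κ₀, …, κ_k > 0`,
`Sep(X; κ₀, …, κ_k) ≤ 2 / √(λ_k(X) · min_i κ_i)`. -/
theorem sep_le_two_div_sqrt_lambdaK {X : Type*}
    [MetricSpace X] [CompactSpace X] [MeasurableSpace X] [BorelSpace X]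
    (μ : Measure X) [IsProbabilityMeasure μ] [μ.IsOpenPosMeasure]
    (k : ℕ) (κ : Fin (k + 1) → ℝ) (hκ : ∀ i, 0 < κ i) :
    sepFam μ κ ≤ (2 : ℝ≥0∞) / ENNReal.ofReal (Real.sqrt (lambdaK μ k * ⨅ i, κ i)) :=
  sep_le_two_div_sqrt_lambdaK_general μ k κ hκ
end

section
/- Let X and Y be compact metric spaces. If K_N(X) = K_N(Y) for every natural number N, then X and Y are isometric. -/
/-!
Finite pieces of `X` embed isometrically into `Y` because `K_N(X) ⊆ K_N(Y)`; since `X → Y` is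
compact by Tychonoff, the closed sets of maps that are isometric on a given finite set have
nonempty intersection, which yields an isometric embedding `X → Y`, and likewise `Y → X`.
An isometric self-embedding `f` of a compact space is onto: for `y` outside the image, the orbit
`f^[n] y` would be `infDist y (range f)`-separated. Applied to `g ∘ f`, this makes `g` onto.
-/

/-- The set of distance matrices of order `N` of a metric space `X`. -/
def distMatrixSet (X : Type*) [MetricSpace X] (N : ℕ) : Set (Fin N → Fin N → ℝ) :=
  { M | ∃ x : Fin N → X, M = fun i j => dist (x i) (x j) }

open Function Metric

lemma exists_lt_dist_lt_of_compactSpace {Z : Type*} [PseudoMetricSpace Z] [CompactSpace Z]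
    (a : ℕ → Z) {ε : ℝ} (hε : 0 < ε) : ∃ m n, m < n ∧ dist (a m) (a n) < ε := by
  obtain ⟨z, φ, hφ, hlim⟩ := CompactSpace.tendsto_subseq a
  obtain ⟨N, hN⟩ := Metric.cauchySeq_iff'.1 hlim.cauchySeq ε hε
  exact ⟨φ N, φ (N + 1), hφ N.lt_succ_self, by simpa [dist_comm] using hN (N + 1) N.le_succ⟩

theorem Isometry.iterate {Z : Type*} [PseudoEMetricSpace Z] {f : Z → Z} (hf : Isometry f) :
    ∀ n, Isometry f^[n]
  | 0 => isometry_id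
  | n + 1 => (hf.iterate n).comp hf

theorem Isometry.surjective_of_compactSpace {Z : Type*} [MetricSpace Z] [CompactSpace Z]
    {f : Z → Z} (hf : Isometry f) : Surjective f := by
  intro y
  by_contra hy
  have hpos : 0 < infDist y (Set.range f) :=
    ((isCompact_range hf.continuous).isClosed.notMem_iff_infDist_pos ⟨f y, y, rfl⟩).1 hy
  obtain ⟨m, n, hmn, hclose⟩ := exists_lt_dist_lt_of_compactSpace (fun k => f^[k] y) hpos
  obtain ⟨k, rfl⟩ := Nat.exists_eq_add_of_lt hmn
  have hdist : dist (f^[m] y) (f^[m + k + 1] y) = dist y (f (f^[k] y)) := by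
    rw [add_assoc, iterate_add_apply, ← iterate_succ_apply' f k]
    exact (hf.iterate m).dist_eq _ _
  exact (infDist_le_dist_of_mem (Set.mem_range_self _)).not_gt (hdist ▸ hclose)

lemma exists_isometry_of_forall_finset {X Y : Type*} [PseudoMetricSpace X]
    [PseudoMetricSpace Y] [CompactSpace Y]
    (h : ∀ F : Finset X, ∃ f : X → Y, ∀ a ∈ F, ∀ b ∈ F, dist (f a) (f b) = dist a b) :
    ∃ f : X → Y, Isometry f := by
  classical
  let t : Finset X → Set (X → Y) := fun F => {f | ∀ a ∈ F, ∀ b ∈ F, dist (f a) (f b) = dist a b}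
  have htd : Directed (· ⊇ ·) t := fun F G => ⟨F ∪ G,
    fun f hf a ha b hb => hf a (Finset.mem_union_left G ha) b (Finset.mem_union_left G hb),
    fun f hf a ha b hb => hf a (Finset.mem_union_right F ha) b (Finset.mem_union_right F hb)⟩
  have htcl : ∀ F, IsClosed (t F) := fun F => by
    simp only [t, Set.ofPred_forall]
    exact isClosed_biInter fun a _ => isClosed_biInter fun b _ =>
      isClosed_eq ((continuous_apply a).dist (continuous_apply b)) continuous_const
  obtain ⟨f, hf⟩ := IsCompact.nonempty_iInter_of_directed_nonempty_isCompact_isClosed t htd h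
    (fun F => (htcl F).isCompact) htcl
  refine ⟨f, Isometry.of_dist_eq fun a b => ?_⟩
  exact Set.mem_iInter.1 hf {a, b} a (by simp) b (by simp)

lemma exists_dist_eq_on_finset_of_distMatrixSet_subset {X Y : Type*} [MetricSpace X]
    [MetricSpace Y] (h : ∀ N, distMatrixSet X N ⊆ distMatrixSet Y N) (F : Finset X) :
    ∃ f : X → Y, ∀ a ∈ F, ∀ b ∈ F, dist (f a) (f b) = dist a b := by
  classical
  obtain ⟨y, hy⟩ := h F.card ⟨fun i => F.equivFin.symm i, rfl⟩
  -- off `F` the map may take any value; `K_1(X) ⊆ K_1(Y)` shows `Y` is nonempty when `X` is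
  let fallback : X → Y := fun a => (h 1 ⟨fun _ => a, rfl⟩).choose 0
  refine ⟨fun a => if ha : a ∈ F then y (F.equivFin ⟨a, ha⟩) else fallback a, fun a ha b hb => ?_⟩
  simpa [ha, hb] using (congrFun₂ hy (F.equivFin ⟨a, ha⟩) (F.equivFin ⟨b, hb⟩)).symm

/-- if two compact metric spaces have the same distance matrix sets
of every order `N`, then they are isometric. -/
theorem isometric_of_distMatrixSet_eq (X Y : Type*)
    [MetricSpace X] [CompactSpace X] [MetricSpace Y] [CompactSpace Y]
    (h : ∀ N : ℕ, distMatrixSet X N = distMatrixSet Y N) :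
    Nonempty (X ≃ᵢ Y) := by
  obtain ⟨f, hf⟩ := exists_isometry_of_forall_finset
    (exists_dist_eq_on_finset_of_distMatrixSet_subset fun N => (h N).subset)
  obtain ⟨g, hg⟩ := exists_isometry_of_forall_finset (X := Y) (Y := X)
    (exists_dist_eq_on_finset_of_distMatrixSet_subset fun N => (h N).superset)
  have hg_surj : Surjective g := (hg.comp hf).surjective_of_compactSpace.of_comp
  exact ⟨(IsometryEquiv.mk (Equiv.ofBijective g ⟨hg.injective, hg_surj⟩) hg).symm⟩
end

section
/- Let X and Y be metric spaces, f : X → Y a Borel measurable map, μ and ν Borel probability measures on X, and ε > 0. Suppose there is a Borel set X₀ ⊂ X with μ(X₀) ≥ 1−ε, ν(X₀) ≥ 1−ε, and d_Y(f(x),f(y)) ≤ d_X(x,y) + ε for all x,y ∈ X₀. Then d_P(f_*μ, f_*ν) ≤ d_P(μ, ν) + 2ε. -/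
open MeasureTheory
open scoped ENNReal

/-!
Set `A := f⁻¹(B) ∩ X₀`. Outside the exceptional set `X₀ᶜ`, which has mass at most `ε` under
both measures, the `δ`-thickening of `A` is mapped into the `(δ + ε)`-thickening of `B`. Hence
every radius `δ` admissible for `(μ, ν)` yields the admissible radius `δ + 2ε` for
`(f_*μ, f_*ν)`: one `ε` of mass is lost when restricting `ν` to `X₀`, the other when
restricting `μ` to `X₀`, while the radius itself grows only by the Lipschitz error `ε`.
-/

section Prohorov

variable {Y : Type*} [PseudoMetricSpace Y] [MeasurableSpace Y]

/-- The radii over which the infimum defining `prohorovDist μ ν` is taken. -/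
def IsProhorovRadius (μ ν : Measure Y) (δ : ℝ) : Prop :=
  0 < δ ∧ ∀ A : Set Y, MeasurableSet A → ν A ≤ μ (Metric.thickening δ A) + ENNReal.ofReal δ

theorem isProhorovRadius_one (μ ν : Measure Y) [IsProbabilityMeasure ν] :
    IsProhorovRadius μ ν 1 :=
  ⟨one_pos, fun _ _ => calc
    _ ≤ 1 := prob_le_one
    _ = ENNReal.ofReal 1 := ENNReal.ofReal_one.symm
    _ ≤ _ := le_add_self⟩

theorem prohorovDist_le {μ ν : Measure Y} {δ : ℝ} (h : IsProhorovRadius μ ν δ) :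
    prohorovDist μ ν ≤ δ :=
  csInf_le ⟨0, fun _ hε => hε.1.le⟩ h

theorem prohorovDist_le_prohorovDist_add {Z : Type*} [PseudoMetricSpace Z] [MeasurableSpace Z]
    (μ ν : Measure Y) [IsProbabilityMeasure ν] {μ' ν' : Measure Z} {c : ℝ}
    (h : ∀ δ, IsProhorovRadius μ ν δ → IsProhorovRadius μ' ν' (δ + c)) :
    prohorovDist μ' ν' ≤ prohorovDist μ ν + c := by
  have hle : prohorovDist μ' ν' - c ≤ prohorovDist μ ν :=
    le_csInf ⟨1, isProhorovRadius_one μ ν⟩ fun δ hδ =>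
      sub_le_iff_le_add.mpr (prohorovDist_le (h δ hδ))
  linarith

end Prohorov

theorem prob_compl_le_ofReal {X : Type*} [MeasurableSpace X] {μ : Measure X}
    [IsProbabilityMeasure μ] {s : Set X} (hs : MeasurableSet s) {ε : ℝ}
    (h : ENNReal.ofReal (1 - ε) ≤ μ s) : μ sᶜ ≤ ENNReal.ofReal ε := by
  rw [prob_compl_eq_one_sub hs, tsub_le_iff_right]
  calc (1 : ℝ≥0∞) = ENNReal.ofReal (ε + (1 - ε)) := by norm_num
    _ ≤ ENNReal.ofReal ε + ENNReal.ofReal (1 - ε) := ENNReal.ofReal_add_le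
    _ ≤ ENNReal.ofReal ε + μ s := by gcongr

theorem measure_le_inter_add_compl {X : Type*} [MeasurableSpace X] (μ : Measure X)
    (s t : Set X) : μ s ≤ μ (s ∩ t) + μ tᶜ :=
  (measure_le_inter_add_sdiff μ s t).trans (by gcongr; exact Set.sdiff_subset_compl s t)

theorem thickening_inter_subset_preimage_thickening {X Y : Type*} [PseudoMetricSpace X]
    [PseudoMetricSpace Y] {f : X → Y} {s : Set X} {ε : ℝ}
    (hf : ∀ x ∈ s, ∀ y ∈ s, dist (f x) (f y) ≤ dist x y + ε) (δ : ℝ) (B : Set Y) :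
    Metric.thickening δ (f ⁻¹' B ∩ s) ∩ s ⊆ f ⁻¹' Metric.thickening (δ + ε) B := by
  rintro x ⟨hx, hxs⟩
  obtain ⟨a, ⟨haB, has⟩, hxa⟩ := Metric.mem_thickening_iff.mp hx
  exact Metric.mem_thickening_iff.mpr ⟨f a, haB, (hf x hxs a has).trans_lt (by linarith)⟩

theorem IsProhorovRadius.map {X Y : Type*} [PseudoMetricSpace X] [MeasurableSpace X]
    [PseudoMetricSpace Y] [MeasurableSpace Y] {f : X → Y} (hf : Measurable f)
    {μ ν : Measure X} {ε δ : ℝ} (hε : 0 ≤ ε) {X₀ : Set X} (hX₀ : MeasurableSet X₀)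
    (hμX₀ : μ X₀ᶜ ≤ ENNReal.ofReal ε) (hνX₀ : ν X₀ᶜ ≤ ENNReal.ofReal ε)
    (hlip : ∀ x ∈ X₀, ∀ y ∈ X₀, dist (f x) (f y) ≤ dist x y + ε)
    (hδ : IsProhorovRadius μ ν δ) :
    IsProhorovRadius (μ.map f) (ν.map f) (δ + 2 * ε) := by
  obtain ⟨hδ_pos, hδ⟩ := hδ
  refine ⟨by linarith, fun B hB => ?_⟩
  set A := f ⁻¹' B ∩ X₀
  have hthick : μ (Metric.thickening δ A) ≤ μ.map f (Metric.thickening (δ + 2 * ε) B) + μ X₀ᶜ :=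
    calc μ (Metric.thickening δ A)
      _ ≤ μ (Metric.thickening δ A ∩ X₀) + μ X₀ᶜ := measure_le_inter_add_compl _ _ _
      _ ≤ μ (f ⁻¹' Metric.thickening (δ + 2 * ε) B) + μ X₀ᶜ := by
        gcongr
        exact (thickening_inter_subset_preimage_thickening hlip δ B).trans
          (Set.preimage_mono (Metric.thickening_mono (by linarith) B))
      _ ≤ μ.map f (Metric.thickening (δ + 2 * ε) B) + μ X₀ᶜ := by
        gcongr; exact Measure.le_map_apply hf.aemeasurable _
  have hofReal : ENNReal.ofReal (δ + 2 * ε) =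
      ENNReal.ofReal δ + ENNReal.ofReal ε + ENNReal.ofReal ε := by
    rw [← ENNReal.ofReal_add hδ_pos.le hε, ← ENNReal.ofReal_add (by linarith) hε]
    ring_nf
  calc ν.map f B = ν (f ⁻¹' B) := Measure.map_apply hf hB
    _ ≤ ν A + ν X₀ᶜ := measure_le_inter_add_compl _ _ _
    _ ≤ μ (Metric.thickening δ A) + ENNReal.ofReal δ + ENNReal.ofReal ε :=
      add_le_add (hδ A ((hf hB).inter hX₀)) hνX₀
    _ ≤ μ.map f (Metric.thickening (δ + 2 * ε) B) + ENNReal.ofReal ε + ENNReal.ofReal δ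
        + ENNReal.ofReal ε := by
      grw [hthick, hμX₀]
    _ = μ.map f (Metric.thickening (δ + 2 * ε) B) + ENNReal.ofReal (δ + 2 * ε) := by
      rw [hofReal]; ring

theorem prohorovDist_map_le_general {X Y : Type*}
    [MetricSpace X] [MeasurableSpace X]
    [MetricSpace Y] [MeasurableSpace Y]
    (f : X → Y) (hf : Measurable f) (μ ν : Measure X)
    [IsProbabilityMeasure μ] [IsProbabilityMeasure ν]
    (ε : ℝ) (hε : 0 < ε)
    (X₀ : Set X) (hX₀ : MeasurableSet X₀)
    (hμX₀ : ENNReal.ofReal (1 - ε) ≤ μ X₀)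
    (hνX₀ : ENNReal.ofReal (1 - ε) ≤ ν X₀)
    (hlip : ∀ x ∈ X₀, ∀ y ∈ X₀, dist (f x) (f y) ≤ dist x y + ε) :
    prohorovDist (Measure.map f μ) (Measure.map f ν) ≤ prohorovDist μ ν + 2 * ε :=
  prohorovDist_le_prohorovDist_add μ ν fun _ hδ =>
    hδ.map hf hε.le hX₀ (prob_compl_le_ofReal hX₀ hμX₀) (prob_compl_le_ofReal hX₀ hνX₀) hlip

/-- if `f : X → Y` is Borel measurable and `1`-Lipschitz up to an
additive error `ε` on a set of `μ`- and `ν`-measure at least `1 − ε`, then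
`d_P(f_*μ, f_*ν) ≤ d_P(μ, ν) + 2ε`. -/
theorem prohorovDist_map_le {X Y : Type*}
    [MetricSpace X] [MeasurableSpace X] [BorelSpace X]
    [MetricSpace Y] [MeasurableSpace Y] [BorelSpace Y]
    (f : X → Y) (hf : Measurable f) (μ ν : Measure X)
    [IsProbabilityMeasure μ] [IsProbabilityMeasure ν]
    (ε : ℝ) (hε : 0 < ε)
    (X₀ : Set X) (hX₀ : MeasurableSet X₀)
    (hμX₀ : ENNReal.ofReal (1 - ε) ≤ μ X₀)
    (hνX₀ : ENNReal.ofReal (1 - ε) ≤ ν X₀)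
    (hlip : ∀ x ∈ X₀, ∀ y ∈ X₀, dist (f x) (f y) ≤ dist x y + ε) :
    prohorovDist (Measure.map f μ) (Measure.map f ν) ≤ prohorovDist μ ν + 2 * ε :=
  prohorovDist_map_le_general f hf μ ν ε hε X₀ hX₀ hμX₀ hνX₀ hlip
end
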